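/- arXiv:1509.06969 — 4 statements merged into one kernel-verified Lean document; each statement's English description precedes it below -/
import Mathlib

section
/- Fix integers n ≥ 3 and B ≥ 1, and real numbers p > 0 and ρ > 0 with ρ·p + p ≤ 1. Define the (B+1)×(B+1) real matrix P indexed by levels 0,…,B by: P(i,i+1) = ρ·p for 0 ≤ i ≤ B−1; P(i,i−1) = (i/(n−3+i))·p for 1 ≤ i ≤ B; P(i,i) = 1 − P(i,i+1) − P(i,i−1) (where a missing up- or down-entry at the boundary is taken as 0); and P(i,l) = 0 whenever |i−l| ≥ 2. Then the row vector π given by π_i = C_i·ρ^i / (∑_{k=0}^{B} C_k·ρ^k) satisfies ∑_{i=0}^{B} π_i = 1 and, for every l ∈ {0,…,B}, ∑_{i=0}^{B} π_i·P(i,l) = π_l; that is, π is a stationary distribution of P. -/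
/-- The vector π with π_i = C_i ρ^i / ∑_k C_k ρ^k is a stationary
distribution of the EMC transition matrix P on levels 0,…,B. Here C_i = C(n-3+i, i). -/
theorem stmt_0 (n B : ℕ) (hn : 3 ≤ n) (hB : 1 ≤ B) (p ρ : ℝ) (hp : 0 < p) (hρ : 0 < ρ)
    (hsub : ρ * p + p ≤ 1)
    (P : ℕ → ℕ → ℝ)
    (hP : ∀ i l, P i l =
      if i < B ∧ l = i + 1 then ρ * p
      else if 1 ≤ i ∧ l + 1 = i then (i : ℝ) / ((n : ℝ) - 3 + i) * p
      else if l = i then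
        1 - (if i < B then ρ * p else 0)
          - (if 1 ≤ i then (i : ℝ) / ((n : ℝ) - 3 + i) * p else 0)
      else 0)
    (π : ℕ → ℝ)
    (hπ : ∀ i, π i = ((n - 3 + i).choose i : ℝ) * ρ ^ i /
      ∑ k ∈ Finset.range (B + 1), ((n - 3 + k).choose k : ℝ) * ρ ^ k) :
    (∑ i ∈ Finset.range (B + 1), π i = 1) ∧
      ∀ l ≤ B, ∑ i ∈ Finset.range (B + 1), π i * P i l = π l := by
  set m := n - 3 with hm
  have hm3 : ((n : ℝ) - 3) = (m : ℝ) := by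
    rw [hm, Nat.cast_sub hn]; norm_num
  set c : ℕ → ℝ := fun i => ((m + i).choose i : ℝ) * ρ ^ i with hc
  have hcpos : ∀ i, 0 < c i := by
    intro i
    have h1 : 0 < (m + i).choose i := Nat.choose_pos (Nat.le_add_left i m)
    have h2 : (0:ℝ) < ((m + i).choose i : ℝ) := by exact_mod_cast h1
    positivity
  have hS : 0 < ∑ k ∈ Finset.range (B + 1), c k := by
    apply Finset.sum_pos (fun k _ => hcpos k)
    exact ⟨0, Finset.mem_range.mpr (by omega)⟩
  -- detailed balance
  have hbal : ∀ k, 1 ≤ k → c (k - 1) * (ρ * p) =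
      c k * ((k : ℝ) / ((n : ℝ) - 3 + (k : ℝ)) * p) := by
    intro k hk
    obtain ⟨j, rfl⟩ : ∃ j, k = j + 1 := ⟨k - 1, (Nat.succ_pred_eq_of_pos hk).symm⟩
    have hj : j + 1 - 1 = j := rfl
    rw [hj, hm3, hc]
    simp only
    have key : ((m + j + 1 : ℕ) : ℝ) * (((m + j).choose j : ℕ) : ℝ)
        = (((m + j + 1).choose (j + 1) : ℕ) : ℝ) * ((j + 1 : ℕ) : ℝ) := by
      exact_mod_cast congrArg (Nat.cast : ℕ → ℝ) (Nat.add_one_mul_choose_eq (m + j) j)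
    have h1 : m + (j + 1) = m + j + 1 := by omega
    rw [h1]
    have hden : ((m : ℝ) + ((j : ℝ) + 1)) ≠ 0 := by positivity
    push_cast at key ⊢
    field_simp
    linear_combination (ρ ^ j * ρ) * key
  -- main: ∑ c i * P i l = c l
  have hmain : ∀ l ≤ B, ∑ i ∈ Finset.range (B + 1), c i * P i l = c l := by
    intro l hl
    rcases Nat.eq_zero_or_pos l with rfl | hl1
    · -- l = 0
      have hsub2 : ({0, 1} : Finset ℕ) ⊆ Finset.range (B + 1) := by
        intro x hx; simp at hx; rcases hx with rfl | rfl <;> simp [Finset.mem_range] <;> omega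
      rw [← Finset.sum_subset hsub2 (by
        intro i hi hi2
        simp [Finset.mem_range] at hi hi2
        rw [hP]
        have h1 : ¬ (i < B ∧ 0 = i + 1) := by omega
        have h2 : ¬ (1 ≤ i ∧ 0 + 1 = i) := by omega
        have h3 : ¬ (0 = i) := by omega
        simp [h1, h2, h3])]
      rw [Finset.sum_pair (by omega : (0:ℕ) ≠ 1)]
      have P00 : P 0 0 = 1 - ρ * p - 0 := by
        rw [hP, if_neg (by omega : ¬ (0 < B ∧ 0 = 0 + 1)),
          if_neg (by omega : ¬ (1 ≤ 0 ∧ 0 + 1 = 0)), if_pos rfl,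
          if_pos (by omega : 0 < B), if_neg (by omega : ¬ (1 ≤ 0))]
      have P10 : P 1 0 = ((1:ℕ) : ℝ) / ((n : ℝ) - 3 + ((1:ℕ) : ℝ)) * p := by
        rw [hP, if_neg (by omega : ¬ (1 < B ∧ 0 = 1 + 1)),
          if_pos (⟨le_rfl, rfl⟩ : 1 ≤ 1 ∧ 0 + 1 = 1)]
      rw [P00, P10]
      have b := hbal 1 le_rfl
      norm_num at b ⊢
      linear_combination -b
    · rcases Nat.lt_or_ge l B with hlB | hlB
      · -- 1 ≤ l < B
        have hsub2 : ({l - 1, l, l + 1} : Finset ℕ) ⊆ Finset.range (B + 1) := by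
          intro x hx; simp at hx; rcases hx with rfl | rfl | rfl <;> simp [Finset.mem_range] <;> omega
        rw [← Finset.sum_subset hsub2 (by
          intro i hi hi2
          simp [Finset.mem_range] at hi hi2
          rw [hP]
          have h1 : ¬ (i < B ∧ l = i + 1) := by omega
          have h2 : ¬ (1 ≤ i ∧ l + 1 = i) := by omega
          have h3 : ¬ (l = i) := by omega
          simp [h1, h2, h3])]
        rw [Finset.sum_insert (by
            simp only [Finset.mem_insert, Finset.mem_singleton]; omega),
          Finset.sum_insert (by
            simp only [Finset.mem_singleton]; omega),
          Finset.sum_singleton]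
        have Pa : P (l - 1) l = ρ * p := by
          rw [hP, if_pos (by omega : l - 1 < B ∧ l = l - 1 + 1)]
        have Pb : P l l = 1 - ρ * p - (l : ℝ) / ((n : ℝ) - 3 + (l : ℝ)) * p := by
          rw [hP, if_neg (by omega : ¬ (l < B ∧ l = l + 1)),
            if_neg (by omega : ¬ (1 ≤ l ∧ l + 1 = l)), if_pos rfl,
            if_pos hlB, if_pos (by omega : 1 ≤ l)]
        have Pc : P (l + 1) l = ((l + 1 : ℕ) : ℝ) / ((n : ℝ) - 3 + ((l + 1 : ℕ) : ℝ)) * p := by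
          rw [hP, if_neg (by omega : ¬ (l + 1 < B ∧ l = l + 1 + 1)),
            if_pos (by omega : 1 ≤ l + 1 ∧ l + 1 = l + 1)]
        rw [Pa, Pb, Pc]
        have b1 := hbal l hl1
        have b2 := hbal (l + 1) (by omega)
        simp only [Nat.add_sub_cancel] at b2
        push_cast at b1 b2 ⊢
        linear_combination b1 - b2
      · -- l = B
        have hlB' : l = B := le_antisymm hl hlB
        subst hlB'
        have hsub2 : ({l - 1, l} : Finset ℕ) ⊆ Finset.range (l + 1) := by
          intro x hx; simp at hx; rcases hx with rfl | rfl <;> simp [Finset.mem_range] <;> omega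
        rw [← Finset.sum_subset hsub2 (by
          intro i hi hi2
          simp [Finset.mem_range] at hi hi2
          rw [hP]
          have h1 : ¬ (i < l ∧ l = i + 1) := by omega
          have h2 : ¬ (1 ≤ i ∧ l + 1 = i) := by omega
          have h3 : ¬ (l = i) := by omega
          simp [h1, h2, h3])]
        rw [Finset.sum_pair (by omega : l - 1 ≠ l)]
        have Pa : P (l - 1) l = ρ * p := by
          rw [hP, if_pos (by omega : l - 1 < l ∧ l = l - 1 + 1)]
        have Pb : P l l = 1 - 0 - (l : ℝ) / ((n : ℝ) - 3 + (l : ℝ)) * p := by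
          rw [hP, if_neg (by omega : ¬ (l < l ∧ l = l + 1)),
            if_neg (by omega : ¬ (1 ≤ l ∧ l + 1 = l)), if_pos rfl,
            if_neg (lt_irrefl l), if_pos (by omega : 1 ≤ l)]
        rw [Pa, Pb]
        have b1 := hbal l hl1
        linear_combination b1
  constructor
  · rw [Finset.sum_congr rfl (fun i _ => hπ i), ← Finset.sum_div]
    exact div_self (ne_of_gt hS)
  · intro l hl
    have hml := hmain l hl
    calc ∑ i ∈ Finset.range (B + 1), π i * P i l
        = (∑ i ∈ Finset.range (B + 1), c i * P i l) / (∑ k ∈ Finset.range (B + 1), c k) := by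
          rw [Finset.sum_div]
          exact Finset.sum_congr rfl (fun i _ => by rw [hπ i]; ring)
      _ = c l / (∑ k ∈ Finset.range (B + 1), c k) := by rw [hml]
      _ = π l := (hπ l).symm
end

section
/- For every integer n ≥ 2 and every real number a > 0, the identity ∑_{k=0}^{n−2} C(n−2, k)·(1/a)^{k+1}·(1−1/a)^{n−2−k}·(1/(k+2)) = a/n − (a−1)/(n−1) + ((a−1)/(n−1) − (a−1)/n)·(1−1/a)^{n−1} holds. -/
/-!
Put `x = 1/a` and `m = n - 2`. The identity `(m+1)(m+2) C(m,k) = (k+1)(k+2) C(m+2,k+2)` absorbs the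
factor `1/(k+2)` and turns the sum into `1/(x(m+1)(m+2))` times `∑_{j ≥ 2} (j-1) b_j`, where
`b_j = C(m+2,j) x^j (1-x)^(m+2-j)` are the Bernstein weights. Since `∑ b_j = 1` and `∑ j b_j = (m+2) x`,
that sum is `(m+2) x - 1 + (1-x)^(m+2)`, the last term compensating for `j = 0`.
-/

open Finset Polynomial

theorem Nat.add_one_mul_add_two_mul_choose_eq (m k : ℕ) :
    (m + 1) * (m + 2) * m.choose k = (k + 1) * (k + 2) * (m + 2).choose (k + 2) := by
  have h₁ := Nat.add_one_mul_choose_eq m k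
  have h₂ := Nat.add_one_mul_choose_eq (m + 1) (k + 1)
  calc (m + 1) * (m + 2) * m.choose k = (m + 2) * (m + 1).choose (k + 1) * (k + 1) := by
        rw [mul_right_comm, h₁]; ring
    _ = (k + 1) * (k + 2) * (m + 2).choose (k + 2) := by rw [h₂]; ring

section Bernstein

variable {R : Type*} [CommRing R]

theorem sum_choose_mul_pow_mul_one_sub_pow (x : R) (n : ℕ) :
    ∑ j ∈ range (n + 1), (n.choose j : R) * x ^ j * (1 - x) ^ (n - j) = 1 := by
  simpa [bernsteinPolynomial, eval_finsetSum] using congrArg (eval x) (bernsteinPolynomial.sum R n)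

theorem sum_mul_choose_mul_pow_mul_one_sub_pow (x : R) (n : ℕ) :
    ∑ j ∈ range (n + 1), (j : R) * ((n.choose j : R) * x ^ j * (1 - x) ^ (n - j)) = n * x := by
  simpa [bernsteinPolynomial, eval_finsetSum] using
    congrArg (eval x) (bernsteinPolynomial.sum_smul R n)

theorem sum_succ_mul_choose_add_two_mul_pow (x : R) (m : ℕ) :
    ∑ k ∈ range (m + 1),
        ((k : R) + 1) * ((m + 2).choose (k + 2) * x ^ (k + 2) * (1 - x) ^ (m - k)) =
      (m + 2) * x - 1 + (1 - x) ^ (m + 2) := by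
  have h : ∑ j ∈ range (m + 2 + 1),
      ((j : R) - 1) * ((m + 2).choose j * x ^ j * (1 - x) ^ (m + 2 - j)) = (m + 2) * x - 1 := by
    simp only [sub_mul, one_mul, sum_sub_distrib, sum_mul_choose_mul_pow_mul_one_sub_pow,
      sum_choose_mul_pow_mul_one_sub_pow]
    push_cast; ring
  have hshift : ∀ k ∈ range (m + 1),
      ((↑(k + 1 + 1) : R) - 1) * ((m + 2).choose (k + 1 + 1) * x ^ (k + 1 + 1) *
        (1 - x) ^ (m + 2 - (k + 1 + 1))) =
      ((k : R) + 1) * ((m + 2).choose (k + 2) * x ^ (k + 2) * (1 - x) ^ (m - k)) := by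
    intro k _
    rw [Nat.add_sub_add_right]
    push_cast
    ring
  rw [sum_range_succ', sum_range_succ', sum_congr rfl hshift] at h
  simp only [Nat.cast_zero, Nat.cast_one, Nat.choose_zero_right, pow_zero, Nat.sub_zero] at h
  linear_combination h

end Bernstein

theorem sum_choose_mul_pow_mul_one_sub_pow_div_add_two {K : Type*} [Field K] [CharZero K]
    (m : ℕ) {x : K} (hx : x ≠ 0) :
    ∑ k ∈ range (m + 1), (m.choose k : K) * x ^ (k + 1) * (1 - x) ^ (m - k) / ((k : K) + 2) =
      ((m + 2) * x - 1 + (1 - x) ^ (m + 2)) / (x * (m + 1) * (m + 2)) := by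
  have hchoose (k : ℕ) : ((m : K) + 1) * (m + 2) * m.choose k =
      ((k : K) + 1) * (k + 2) * (m + 2).choose (k + 2) := by
    exact_mod_cast Nat.add_one_mul_add_two_mul_choose_eq m k
  rw [← sum_succ_mul_choose_add_two_mul_pow, sum_div]
  refine sum_congr rfl fun k _ => ?_
  have hk : (k : K) + 2 ≠ 0 := by norm_cast
  have hm₁ : (m : K) + 1 ≠ 0 := by norm_cast
  have hm₂ : (m : K) + 2 ≠ 0 := by norm_cast
  field_simp
  linear_combination x ^ (k + 2) * (1 - x) ^ (m - k) * hchoose k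

/-- For n ≥ 2 and a > 0 (a = m² in the MANET model),
∑_{k=0}^{n−2} C(n−2,k)·(1/a)^{k+1}·(1−1/a)^{n−2−k}·(1/(k+2))
  = a/n − (a−1)/(n−1) + ((a−1)/(n−1) − (a−1)/n)·(1−1/a)^{n−1}. -/
theorem stmt_15 (n : ℕ) (hn : 2 ≤ n) (a : ℝ) (ha : 0 < a) :
    ∑ k ∈ Finset.range (n - 1),
        ((n - 2).choose k : ℝ) * (1 / a) ^ (k + 1) * (1 - 1 / a) ^ (n - 2 - k) *
          (1 / ((k : ℝ) + 2)) =
      a / n - (a - 1) / ((n : ℝ) - 1) +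
        ((a - 1) / ((n : ℝ) - 1) - (a - 1) / n) * (1 - 1 / a) ^ (n - 1) := by
  obtain ⟨m, rfl⟩ : ∃ m, n = m + 2 := ⟨n - 2, by omega⟩
  simp only [Nat.add_sub_cancel, mul_one_div]
  rw [show m + 2 - 1 = m + 1 by omega,
    sum_choose_mul_pow_mul_one_sub_pow_div_add_two m (one_div_ne_zero ha.ne'), pow_succ]
  generalize (1 - 1 / a) ^ (m + 1) = y
  push_cast
  rw [show (m : ℝ) + 2 - 1 = m + 1 by ring]
  field_simp
  ring
end

section
/- Let n ≥ 2 and ν ≥ 1 be integers, set Γ = (2ν−1)², and let a > 0 be a real number. Then the identity ∑_{k=0}^{n−2} C(n−2, k)·(1/a)^{k+1}·(1−1/a)^{n−2−k}·(1/(k+2) + (Γ−1)/(k+1)) = (Γ − a/n)/(n−1) + (a − 1 − (Γ−1)·n)/(n·(n−1))·(1−1/a)^{n−1} holds. -/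
open Finset

lemma binA (m : ℕ) (x : ℝ) :
    ∑ k ∈ Finset.range (m + 1), ((m + 1).choose (k + 1) : ℝ) * x ^ (k + 1) * (1 - x) ^ (m - k)
      = 1 - (1 - x) ^ (m + 1) := by
  have h := add_pow x (1 - x) (m + 1)
  rw [add_sub_cancel, Finset.sum_range_succ'] at h
  simp only [Nat.succ_sub_succ, Nat.sub_zero, pow_zero, one_mul, Nat.choose_zero_right,
    Nat.cast_one, mul_one, one_pow] at h
  have e : ∑ k ∈ Finset.range (m + 1),
      ((m + 1).choose (k + 1) : ℝ) * x ^ (k + 1) * (1 - x) ^ (m - k)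
      = ∑ k ∈ Finset.range (m + 1),
      x ^ (k + 1) * (1 - x) ^ (m - k) * ((m + 1).choose (k + 1) : ℝ) :=
    Finset.sum_congr rfl fun k _ => by ring
  rw [e]
  linarith

lemma binB (m : ℕ) (x : ℝ) :
    ∑ k ∈ Finset.range (m + 1), ((m + 2).choose (k + 2) : ℝ) * x ^ (k + 2) * (1 - x) ^ (m - k)
      = 1 - (1 - x) ^ (m + 2) - ((m : ℝ) + 2) * x * (1 - x) ^ (m + 1) := by
  have h := add_pow x (1 - x) (m + 2)
  rw [add_sub_cancel, Finset.sum_range_succ', Finset.sum_range_succ'] at h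
  simp only [Nat.succ_sub_succ, Nat.sub_zero, pow_zero, pow_one, one_mul, zero_add,
    Nat.choose_zero_right, Nat.choose_one_right, Nat.cast_one, mul_one, one_pow] at h
  push_cast at h
  have e : ∑ k ∈ Finset.range (m + 1),
      ((m + 2).choose (k + 2) : ℝ) * x ^ (k + 2) * (1 - x) ^ (m - k)
      = ∑ k ∈ Finset.range (m + 1),
      x ^ (k + 1 + 1) * (1 - x) ^ (m - k) * ((m + 2).choose (k + 1 + 1) : ℝ) :=
    Finset.sum_congr rfl fun k _ => by ring
  rw [e]
  linarith

/-- For n ≥ 2, ν ≥ 1, Γ = (2ν−1)² and a > 0 (a = m² in the MANET model),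
∑_{k=0}^{n−2} C(n−2,k)·(1/a)^{k+1}·(1−1/a)^{n−2−k}·(1/(k+2) + (Γ−1)/(k+1))
  = (Γ − a/n)/(n−1) + (a − 1 − (Γ−1)·n)/(n·(n−1))·(1−1/a)^{n−1}. -/
theorem stmt_17 (n ν : ℕ) (hn : 2 ≤ n) (hν : 1 ≤ ν) (a : ℝ) (ha : 0 < a) :
    ∑ k ∈ Finset.range (n - 1),
        ((n - 2).choose k : ℝ) * (1 / a) ^ (k + 1) * (1 - 1 / a) ^ (n - 2 - k) *
          (1 / ((k : ℝ) + 2) + (((2 * ν - 1) ^ 2 : ℕ) - 1 : ℝ) / ((k : ℝ) + 1)) =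
      ((((2 * ν - 1) ^ 2 : ℕ) : ℝ) - a / n) / ((n : ℝ) - 1) +
        (a - 1 - ((((2 * ν - 1) ^ 2 : ℕ) : ℝ) - 1) * n) / ((n : ℝ) * ((n : ℝ) - 1)) *
          (1 - 1 / a) ^ (n - 1) := by
  obtain ⟨m, rfl⟩ : ∃ m, n = m + 2 := ⟨n - 2, by omega⟩
  set G : ℝ := (((2 * ν - 1) ^ 2 : ℕ) : ℝ) with hG
  set x : ℝ := 1 / a with hx
  have ha0 : a ≠ 0 := ne_of_gt ha
  have hx0 : x ≠ 0 := by rw [hx]; positivity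
  have hxa : x * a = 1 := by rw [hx]; field_simp
  simp only [Nat.add_sub_cancel, show m + 2 - 1 = m + 1 from rfl]
  have hm1 : ((m:ℝ) + 1) ≠ 0 := by positivity
  have hm2 : ((m:ℝ) + 2) ≠ 0 := by positivity
  have key : x * ((m:ℝ)+1) * ((m:ℝ)+2) * (∑ k ∈ Finset.range (m + 1),
      ((m).choose k : ℝ) * x ^ (k + 1) * (1 - x) ^ (m - k) *
        (1 / ((k : ℝ) + 2) + (G - 1) / ((k : ℝ) + 1)))
      = G * ((m:ℝ)+2) * x * (1 - (1-x)^(m+1))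
        - (1 - (1-x)^(m+2) - ((m:ℝ)+2) * x * (1-x)^(m+1)) := by
    rw [show G * ((m:ℝ)+2) * x * (1 - (1-x)^(m+1))
        - (1 - (1-x)^(m+2) - ((m:ℝ)+2) * x * (1-x)^(m+1))
        = G * ((m:ℝ)+2) * x * (∑ k ∈ Finset.range (m + 1),
            ((m + 1).choose (k + 1) : ℝ) * x ^ (k + 1) * (1 - x) ^ (m - k))
          - (∑ k ∈ Finset.range (m + 1),
            ((m + 2).choose (k + 2) : ℝ) * x ^ (k + 2) * (1 - x) ^ (m - k)) by
      rw [binA, binB]]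
    rw [Finset.mul_sum, Finset.mul_sum, ← Finset.sum_sub_distrib]
    apply Finset.sum_congr rfl
    intro k _
    have hk1 : ((k:ℝ) + 1) ≠ 0 := by positivity
    have hk2 : ((k:ℝ) + 2) ≠ 0 := by positivity
    have c1 : ((m + 1).choose (k + 1) : ℝ) = ((m:ℝ) + 1) * (m.choose k : ℝ) / ((k:ℝ) + 1) := by
      rw [eq_div_iff hk1]
      exact_mod_cast (Nat.add_one_mul_choose_eq m k).symm
    have c2 : ((m + 2).choose (k + 2) : ℝ)
        = ((m:ℝ) + 2) * ((m + 1).choose (k + 1) : ℝ) / ((k:ℝ) + 2) := by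
      rw [eq_div_iff hk2]
      exact_mod_cast (Nat.add_one_mul_choose_eq (m + 1) (k + 1)).symm
    rw [c2, c1]
    field_simp
    ring
  have hmul : (x * ((m:ℝ)+1) * ((m:ℝ)+2)) ≠ 0 :=
    mul_ne_zero (mul_ne_zero hx0 hm1) hm2
  apply mul_left_cancel₀ hmul
  push_cast
  rw [key]
  have e1 : ((m:ℝ) + 2) - 1 = (m:ℝ) + 1 := by ring
  rw [e1, pow_succ (1 - x) (m + 1)]
  rw [hx]
  field_simp
  ring
end

section
/- Let n ≥ 3 and ν ≥ 1 be integers, set Γ = (2ν−1)², and let a be a real number with a ≥ Γ. Then the identity ((a−Γ)/a)·( ∑_{k=1}^{n−2} C(n−2, k)·(1/a)^{k}·(1−1/a)^{n−2−k}·(1/(k+1)) + ∑_{k=1}^{n−2} C(n−2, k)·((Γ−1)/a)^{k}·((a−Γ)/a)^{n−2−k} ) = ((a−Γ)/(n−1))·(1 − (1−1/a)^{n−1}) − (1 − Γ/a)^{n−1} holds. -/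
/-!
With `x = 1/a`, `y = 1 - 1/a` and `N = n - 2`, the first sum is a binomial expansion weighted by
`1/(k+1)`; since `C(N, k)/(k+1) = C(N+1, k+1)/(N+1)` it sums to
`a((x + y)^(N+1) - y^(N+1))/(N+1) - y^N`. The second sum is `(p + q)^N - q^N` with
`p + q = (Γ-1)/a + (a-Γ)/a = y`, so the `y^N` terms cancel and only
`a(1 - y^(N+1))/(N+1) - q^N` survives, which multiplied by `q = (a-Γ)/a` is the right-hand side.
-/

open Finset

theorem sum_Icc_one_eq_sum_range_sub {M : Type*} [AddCommGroup M] (f : ℕ → M) (N : ℕ) :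
    ∑ k ∈ Icc 1 N, f k = ∑ k ∈ range (N + 1), f k - f 0 := by
  rw [Nat.range_succ_eq_Icc_zero, ← insert_Icc_add_one_left_eq_Icc N.zero_le,
    sum_insert (by simp), zero_add, add_sub_cancel_left]

theorem sum_Icc_one_choose_mul_pow {R : Type*} [CommRing R] (x y : R) (N : ℕ) :
    ∑ k ∈ Icc 1 N, (N.choose k : R) * x ^ k * y ^ (N - k) = (x + y) ^ N - y ^ N := by
  rw [sum_Icc_one_eq_sum_range_sub, add_pow]
  simp only [pow_zero, Nat.choose_zero_right, Nat.cast_one, one_mul, Nat.sub_zero]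
  congr 1
  exact sum_congr rfl fun k _ => by ring

theorem add_one_mul_sum_range_choose_mul_pow_div {K : Type*} [Field K] [CharZero K]
    (x y : K) (N : ℕ) :
    ((N : K) + 1) * x * ∑ k ∈ range (N + 1), (N.choose k : K) * x ^ k * y ^ (N - k) / (k + 1) =
      (x + y) ^ (N + 1) - y ^ (N + 1) := by
  rw [add_pow, sum_range_succ' _ (N + 1), mul_sum]
  simp only [pow_zero, one_mul, Nat.sub_zero, Nat.choose_zero_right, Nat.cast_one, mul_one,
    add_sub_cancel_right]
  refine sum_congr rfl fun k _ => ?_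
  have hchoose : ((N : K) + 1) * N.choose k = (N + 1).choose (k + 1) * ((k : K) + 1) := by
    exact_mod_cast Nat.add_one_mul_choose_eq N k
  rw [Nat.add_sub_add_right]
  field_simp
  linear_combination x ^ (k + 1) * y ^ (N - k) * hchoose

theorem relay_probability_identity {K : Type*} [Field K] [CharZero K]
    (a Γ : K) (ha : a ≠ 0) (N : ℕ) :
    ((a - Γ) / a) *
        ((∑ k ∈ Icc 1 N, (N.choose k : K) * (1 / a) ^ k * (1 - 1 / a) ^ (N - k) *
              (1 / ((k : K) + 1))) +
          ∑ k ∈ Icc 1 N, (N.choose k : K) * ((Γ - 1) / a) ^ k * ((a - Γ) / a) ^ (N - k)) =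
      ((a - Γ) / ((N : K) + 1)) * (1 - (1 - 1 / a) ^ (N + 1)) - (1 - Γ / a) ^ (N + 1) := by
  have hS₁ : ∑ k ∈ Icc 1 N, (N.choose k : K) * (1 / a) ^ k * (1 - 1 / a) ^ (N - k) *
      (1 / ((k : K) + 1)) = a * (1 - (1 - 1 / a) ^ (N + 1)) / ((N : K) + 1) - (1 - 1 / a) ^ N := by
    have h := add_one_mul_sum_range_choose_mul_pow_div (1 / a) (1 - 1 / a) N
    rw [add_sub_cancel, one_pow] at h
    simp only [mul_one_div, sum_Icc_one_eq_sum_range_sub, Nat.choose_zero_right, pow_zero,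
      Nat.sub_zero]
    rw [← h]
    field_simp
    ring
  have hS₂ := sum_Icc_one_choose_mul_pow ((Γ - 1) / a) ((a - Γ) / a) N
  have hsum : (Γ - 1) / a + (a - Γ) / a = 1 - 1 / a := by field_simp; ring
  have hq : (a - Γ) / a * a = a - Γ := div_mul_cancel₀ _ ha
  rw [hS₁, hS₂, hsum, show 1 - Γ / a = (a - Γ) / a by field_simp, pow_succ]
  linear_combination (1 - (1 - 1 / a) ^ (N + 1)) / ((N : K) + 1) * hq

/-- For n ≥ 3, ν ≥ 1, Γ = (2ν−1)² and a ≥ Γ (a = m² in the MANET model),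
((a−Γ)/a)·( ∑_{k=1}^{n−2} C(n−2,k)·(1/a)^k·(1−1/a)^{n−2−k}·(1/(k+1))
           + ∑_{k=1}^{n−2} C(n−2,k)·((Γ−1)/a)^k·((a−Γ)/a)^{n−2−k} )
  = ((a−Γ)/(n−1))·(1 − (1−1/a)^{n−1}) − (1 − Γ/a)^{n−1}. -/
theorem stmt_18 (n ν : ℕ) (hn : 3 ≤ n) (hν : 1 ≤ ν) (a : ℝ)
    (ha : ((((2 * ν - 1) ^ 2 : ℕ)) : ℝ) ≤ a) :
    ((a - (((2 * ν - 1) ^ 2 : ℕ) : ℝ)) / a) *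
        ((∑ k ∈ Finset.Icc 1 (n - 2),
            ((n - 2).choose k : ℝ) * (1 / a) ^ k * (1 - 1 / a) ^ (n - 2 - k) *
              (1 / ((k : ℝ) + 1))) +
          ∑ k ∈ Finset.Icc 1 (n - 2),
            ((n - 2).choose k : ℝ) * (((((2 * ν - 1) ^ 2 : ℕ) : ℝ) - 1) / a) ^ k *
              ((a - (((2 * ν - 1) ^ 2 : ℕ) : ℝ)) / a) ^ (n - 2 - k)) =
      ((a - (((2 * ν - 1) ^ 2 : ℕ) : ℝ)) / ((n : ℝ) - 1)) *
          (1 - (1 - 1 / a) ^ (n - 1)) -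
        (1 - (((2 * ν - 1) ^ 2 : ℕ) : ℝ) / a) ^ (n - 1) := by
  have hΓ : 1 ≤ (2 * ν - 1) ^ 2 := Nat.one_le_pow _ _ (by omega)
  have ha₀ : a ≠ 0 := (one_pos.trans_le ((Nat.one_le_cast.mpr hΓ).trans ha)).ne'
  obtain ⟨N, rfl⟩ : ∃ N, n = N + 2 := ⟨n - 2, by omega⟩
  have hcast : ((N + 2 : ℕ) : ℝ) - 1 = N + 1 := by push_cast; ring
  rw [Nat.add_sub_cancel, show N + 2 - 1 = N + 1 by omega, hcast]
  exact relay_probability_identity a _ ha₀ N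
end
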